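/- Let X be a nested almost convex set with convex layers R_1, …, R_k. Then either |R_j| = 2^j for all 1 ≤ j ≤ k, or |R_1| = 1 and |R_j| = 3·2^(j−2) for all 2 ≤ j ≤ k. -/

import Mathlib

open Set

noncomputable section

/-- Points of the plane. -/
abbrev Pt : Type := ℝ × ℝ

/-- The orientation determinant of the triple `(a, b, c)`:
`c` lies strictly to the left of the directed line from `a` to `b` iff `orient a b c > 0`. -/
def orient (a b c : Pt) : ℝ :=
  (b.1 - a.1) * (c.2 - a.2) - (b.2 - a.2) * (c.1 - a.1)

/-- A set of points is in general position if no three pairwise distinct points are collinear. -/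
def GenPos (X : Set Pt) : Prop :=
  ∀ a ∈ X, ∀ b ∈ X, ∀ c ∈ X, a ≠ b → a ≠ c → b ≠ c → orient a b c ≠ 0

/-- The set of extreme points of the convex hull of `S`. -/
def extremePts (S : Set Pt) : Set Pt := Set.extremePoints ℝ (convexHull ℝ S)

/-- Remove the extreme points of the convex hull (one peeling step of convex layers). -/
def peel (S : Set Pt) : Set Pt := S \ extremePts S

/-- `X` has exactly `k` convex layers. -/
def HasLayers (X : Set Pt) (k : ℕ) : Prop :=
  peel^[k] X = ∅ ∧ ∀ j < k, peel^[j] X ≠ ∅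

/-- `X_j`, the union of the `j` innermost convex layers (when `X` has `k` layers). -/
def layerSub (X : Set Pt) (k j : ℕ) : Set Pt := peel^[k - j] X

/-- `R_j`, the `j`-th convex layer of `X` (when `X` has `k` layers), `R_1` innermost. -/
def layer (X : Set Pt) (k j : ℕ) : Set Pt := extremePts (layerSub X k j)

/-- `X` is a nested almost convex set. -/
def IsNACS (X : Set Pt) : Prop :=
  X.Finite ∧ X.Nonempty ∧ GenPos X ∧
  ∀ k, HasLayers X k →
    ∀ j, 1 ≤ j → j ≤ k →
      ∀ a ∈ layer X k j, ∀ b ∈ layer X k j, ∀ c ∈ layer X k j,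
        a ≠ b → a ≠ c → b ≠ c →
        ∃! p : Pt, p ∈ layerSub X k (j - 1) ∩ interior (convexHull ℝ ({a, b, c} : Set Pt))

/-- `q` is a counterclockwise enumeration of `S`. -/
def CCWEnum {m : ℕ} (S : Set Pt) (q : Fin m → Pt) : Prop :=
  Function.Injective q ∧ Set.range q = S ∧
  ∀ a b c : Fin m, a < b → b < c → 0 < orient (q a) (q b) (q c)

/-- The ordered pair `(q1, q2)` of points of `R` is adoptable from `p`. -/
def AdoptablePair (R : Set Pt) (p q1 q2 : Pt) : Prop :=
  ∀ q3 ∈ R \ ({q1, q2} : Set Pt), p ∈ interior (convexHull ℝ ({q1, q2, q3} : Set Pt))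

/-- The `i`-th binary string of length `j` in lexicographic order (`false` before `true`). -/
def strOfNat (j i : ℕ) : List Bool :=
  (List.range j).map fun t => i.testBit (j - 1 - t)

/-- The numeric (lexicographic) rank of a binary string among strings of its length. -/
def natOfStr (s : List Bool) : ℕ := s.foldl (fun n b => 2 * n + b.toNat) 0

/-- The leftmost `k`-level descendant of the node `s`. -/
def firstStr (k : ℕ) (s : List Bool) : List Bool := s ++ List.replicate (k - s.length) false

/-- The rightmost `k`-level descendant of the node `s`. -/
def lastStr (k : ℕ) (s : List Bool) : List Bool := s ++ List.replicate (k - s.length) true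

/-- Non-root nodes of the tree `T₁(k)`: binary strings of length `1..k`. -/
def ValidNode1 (k : ℕ) (s : List Bool) : Prop := 1 ≤ s.length ∧ s.length ≤ k

/-- A type-1 labeling of `X`, given by its label function `x` (the inverse of `ψ`). -/
def IsLabeling1 (k : ℕ) (X : Set Pt) (x : List Bool → Pt) : Prop :=
  Set.InjOn x {s | ValidNode1 k s} ∧ x '' {s | ValidNode1 k s} = X

/-- A type-1 labeling is nested. -/
def Nested1 (k : ℕ) (X : Set Pt) (x : List Bool → Pt) : Prop :=
  ∀ j, 1 ≤ j → j ≤ k →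
    CCWEnum (layer X k j) fun i : Fin (2 ^ j) => x (strOfNat j i.val)

/-- A type-1 labeling is adoptable. -/
def Adoptable1 (k : ℕ) (X : Set Pt) (x : List Bool → Pt) : Prop :=
  ∀ s : List Bool, 1 ≤ s.length → s.length + 1 ≤ k →
    AdoptablePair (layer X k (s.length + 1)) (x s) (x (s ++ [false])) (x (s ++ [true]))

/-- `previous[R_k(u)]` for a type-1 labeling: the cyclic predecessor (in the left-to-right,
i.e. counterclockwise, order of the `k`-level) of `first[R_k(u)]`. -/
def prev1 (k : ℕ) (x : List Bool → Pt) (s : List Bool) : Pt :=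
  x (strOfNat k ((natOfStr (firstStr k s) + (2 ^ k - 1)) % 2 ^ k))

/-- `next[R_k(u)]` for a type-1 labeling: the cyclic successor of `last[R_k(u)]`. -/
def next1 (k : ℕ) (x : List Bool → Pt) (s : List Bool) : Pt :=
  x (strOfNat k ((natOfStr (lastStr k s) + 1) % 2 ^ k))

/-- A type-1 labeling is well laid. -/
def WellLaid1 (k : ℕ) (x : List Bool → Pt) : Prop :=
  ∀ s : List Bool, 1 ≤ s.length → s.length ≤ k →
    x s ∈ convexHull ℝ ({prev1 k x s, x (firstStr k s), x (lastStr k s)} : Set Pt) ∧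
    x s ∈ convexHull ℝ ({x (firstStr k s), x (lastStr k s), next1 k x s} : Set Pt)

/-- `X_u` for a type-1 labeling: the labels of the proper descendants of `s`. -/
def descSet1 (k : ℕ) (x : List Bool → Pt) (s : List Bool) : Set Pt :=
  x '' {t | ValidNode1 k t ∧ s <+: t ∧ s ≠ t}

/-- `X̄_u = X_u ∪ {x_u}` for a type-1 labeling. -/
def barSet1 (k : ℕ) (x : List Bool → Pt) (s : List Bool) : Set Pt :=
  insert (x s) (descSet1 k x s)

/-- A type-1 labeling is an internal separation. -/
def InternalSep1 (k : ℕ) (X : Set Pt) (x : List Bool → Pt) : Prop :=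
  ∀ s : List Bool, s.length + 1 ≤ k →
    ∀ y ∈ X \ descSet1 k x s,
      ∀ a ∈ barSet1 k x (s ++ [false]), ∀ b ∈ barSet1 k x (s ++ [true]),
        0 < orient a b y

/-- A type-1 labeling is an external separation. -/
def ExternalSep1 (k : ℕ) (X : Set Pt) (x : List Bool → Pt) : Prop :=
  ∀ s : List Bool, 1 ≤ s.length → s.length + 1 ≤ k →
    ∀ y ∈ X \ barSet1 k x s,
      (∀ a ∈ barSet1 k x (s ++ [false]), 0 < orient a (x s) y) ∧
      (∀ b ∈ barSet1 k x (s ++ [true]), 0 < orient (x s) b y)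

/-- Nodes of the tree `T₂(k)`: the root `none`, and pairs `(c, s)`. -/
abbrev Node2 : Type := Option (Fin 3 × List Bool)

/-- Valid nodes of `T₂(k)`: the root, and pairs `(c, s)` with `|s| ≤ k - 2`. -/
def ValidNode2 (k : ℕ) : Node2 → Prop
  | none => True
  | some (_, s) => s.length + 2 ≤ k

/-- A type-2 labeling of `X`, given by its label function `x` (the inverse of `ψ`). -/
def IsLabeling2 (k : ℕ) (X : Set Pt) (x : Node2 → Pt) : Prop :=
  Set.InjOn x {u | ValidNode2 k u} ∧ x '' {u | ValidNode2 k u} = X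

/-- The `i`-th node (left-to-right) of the `(j+2)`-level of `T₂(k)`. -/
def node2At (j i : ℕ) : Node2 :=
  some (⟨i / 2 ^ j % 3, by omega⟩, strOfNat j (i % 2 ^ j))

/-- A type-2 labeling is nested. -/
def Nested2 (k : ℕ) (X : Set Pt) (x : Node2 → Pt) : Prop :=
  CCWEnum (layer X k 1) (fun _ : Fin 1 => x none) ∧
  ∀ j : ℕ, j + 2 ≤ k →
    CCWEnum (layer X k (j + 2)) fun i : Fin (3 * 2 ^ j) => x (node2At j i.val)

/-- A type-2 labeling is adoptable. -/
def Adoptable2 (k : ℕ) (X : Set Pt) (x : Node2 → Pt) : Prop :=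
  ∀ (c : Fin 3) (s : List Bool), s.length + 3 ≤ k →
    AdoptablePair (layer X k (s.length + 3)) (x (some (c, s)))
      (x (some (c, s ++ [false]))) (x (some (c, s ++ [true])))

/-- `previous[R_k(u)]` for a type-2 labeling, `u = (c, s)`. -/
def prev2 (k : ℕ) (x : Node2 → Pt) (c : Fin 3) (s : List Bool) : Pt :=
  x (node2At (k - 2)
      ((c.val * 2 ^ (k - 2) + natOfStr (firstStr (k - 2) s) + (3 * 2 ^ (k - 2) - 1)) %
        (3 * 2 ^ (k - 2))))

/-- `next[R_k(u)]` for a type-2 labeling, `u = (c, s)`. -/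
def next2 (k : ℕ) (x : Node2 → Pt) (c : Fin 3) (s : List Bool) : Pt :=
  x (node2At (k - 2)
      ((c.val * 2 ^ (k - 2) + natOfStr (lastStr (k - 2) s) + 1) % (3 * 2 ^ (k - 2))))

/-- A type-2 labeling is well laid (the root is the only node with `R_k(u) = R_k`). -/
def WellLaid2 (k : ℕ) (x : Node2 → Pt) : Prop :=
  ∀ (c : Fin 3) (s : List Bool), s.length + 2 ≤ k →
    x (some (c, s)) ∈ convexHull ℝ
      ({prev2 k x c s, x (some (c, firstStr (k - 2) s)),
        x (some (c, lastStr (k - 2) s))} : Set Pt) ∧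
    x (some (c, s)) ∈ convexHull ℝ
      ({x (some (c, firstStr (k - 2) s)), x (some (c, lastStr (k - 2) s)),
        next2 k x c s} : Set Pt)

/-- `X_u` for a type-2 labeling and a non-root node `u = (c, s)`. -/
def descSet2 (k : ℕ) (x : Node2 → Pt) (c : Fin 3) (s : List Bool) : Set Pt :=
  x '' {u | ∃ t : List Bool, u = some (c, t) ∧ t.length + 2 ≤ k ∧ s <+: t ∧ s ≠ t}

/-- `X̄_u = X_u ∪ {x_u}` for a type-2 labeling and a non-root node `u = (c, s)`. -/
def barSet2 (k : ℕ) (x : Node2 → Pt) (c : Fin 3) (s : List Bool) : Set Pt :=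
  insert (x (some (c, s))) (descSet2 k x c s)

/-- A type-2 labeling is an internal separation. -/
def InternalSep2 (k : ℕ) (X : Set Pt) (x : Node2 → Pt) : Prop :=
  (∀ (c : Fin 3) (s : List Bool), s.length + 3 ≤ k →
    ∀ y ∈ X \ descSet2 k x c s,
      ∀ a ∈ barSet2 k x c (s ++ [false]), ∀ b ∈ barSet2 k x c (s ++ [true]),
        0 < orient a b y) ∧
  (∀ i : Fin 3,
    ∀ y ∈ X \ (barSet2 k x i [] ∪ barSet2 k x (i + 1) []),
      ∀ a ∈ barSet2 k x i [], ∀ b ∈ barSet2 k x (i + 1) [],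
        0 < orient a b y)

/-- A type-2 labeling is an external separation. -/
def ExternalSep2 (k : ℕ) (X : Set Pt) (x : Node2 → Pt) : Prop :=
  ∀ (c : Fin 3) (s : List Bool), s.length + 3 ≤ k →
    ∀ y ∈ X \ barSet2 k x c s,
      (∀ a ∈ barSet2 k x c (s ++ [false]), 0 < orient a (x (some (c, s))) y) ∧
      (∀ b ∈ barSet2 k x c (s ++ [true]), 0 < orient (x (some (c, s))) b y)

/-- One corner-refinement step: from `α_s = (q, o, p)` to `α_{s0}` (for `b = false`)
or `α_{s1}` (for `b = true`). -/
def cornerStep (α : Pt × Pt × Pt) (b : Bool) : Pt × Pt × Pt :=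
  let q := α.1
  let o := α.2.1
  let p := α.2.2
  if b then (o + (1 / 5 : ℝ) • (q - o), o + (1 / 5 : ℝ) • (p - o), o + (2 / 5 : ℝ) • (p - o))
  else (o + (2 / 5 : ℝ) • (q - o), o + (1 / 5 : ℝ) • (q - o), o + (1 / 5 : ℝ) • (p - o))

/-- The corner `α_s = (q_s, o_s, p_s)` assigned to the binary string `s` (with parameter `k`). -/
def corner (k : ℕ) (s : List Bool) : Pt × Pt × Pt :=
  s.foldl cornerStep
    (((0 : ℝ), (2 * 5 ^ (k + 1) : ℝ)), ((0 : ℝ), (0 : ℝ)), ((2 * 5 ^ (k + 1) : ℝ), (0 : ℝ)))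

/-- The point `y_v` for a binary string `v = s ++ [b]` of positive length. -/
def ypt (k : ℕ) (v : List Bool) : Pt :=
  let α := corner k v.dropLast
  if v.getLastD false then α.2.1 + (1 / 5 : ℝ) • (α.2.2 - α.2.1)
  else α.2.1 + (1 / 5 : ℝ) • (α.1 - α.2.1)

/-- The point `x_s`: the midpoint of `y_{s·0^(k+1−|s|)}` and `y_{s·1^(k+1−|s|)}`. -/
def xpt (k : ℕ) (s : List Bool) : Pt :=
  (1 / 2 : ℝ) •
    (ypt k (s ++ List.replicate (k + 1 - s.length) false) +
      ypt k (s ++ List.replicate (k + 1 - s.length) true))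

/-!
Let `R` be a convex polygon and `S` a set in its interior, in general position together, such
that every triangle spanned by `R` has exactly one point of `S` in its interior. Then
`|S| = |R| - 2`: cut off an ear `v` of `R`, whose neighbours `u`, `w` see all other vertices
beyond the diagonal `uw`. The triangle `vuw` contains a unique point `q` of `S`, and `R \ {v}`,
`S \ {q}` satisfy the same hypotheses.

For a nested almost convex set this applies to `R = R_{j+1}` and `S = X_j`, giving
`|R_{j+1}| = |X_j| + 2`, while `|X_{j+1}| = |X_j| + |R_{j+1}|`; so `|X_j| + 2` doubles from
layer to layer. Finally `|R_1| ∈ {1, 2}`, since `X_0 = ∅` leaves no point for a triangle in `R_1`.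
-/

lemma orient_rotate (a b c : Pt) : orient b c a = orient a b c := by
  simp only [orient]; ring

lemma orient_swap_left (a b c : Pt) : orient b a c = -orient a b c := by
  simp only [orient]; ring

lemma orient_swap_right (a b c : Pt) : orient a c b = -orient a b c := by
  simp only [orient]; ring

lemma orient_self_left (a b : Pt) : orient a b a = 0 := by
  simp only [orient]; ring

lemma orient_self_right (a b : Pt) : orient a b b = 0 := by
  simp only [orient]; ring

lemma orient_add_orient_add_orient (a b c z : Pt) :
    orient b c z + orient c a z + orient a b z = orient a b c := by
  simp only [orient]; ring

lemma orient_smul_eq (a b c z : Pt) :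
    orient a b c • z = orient b c z • a + orient c a z • b + orient a b z • c := by
  ext <;> simp only [orient, Prod.smul_fst, Prod.smul_snd, Prod.fst_add, Prod.snd_add,
    smul_eq_mul] <;> ring

lemma continuous_orient (a b : Pt) : Continuous (orient a b) := by
  unfold orient; fun_prop

lemma convex_setOf_orient_nonneg (a b : Pt) : Convex ℝ {z : Pt | 0 ≤ orient a b z} := by
  intro x hx y hy s t hs ht hst
  have : orient a b (s • x + t • y) = s * orient a b x + t * orient a b y := by
    simp only [orient, Prod.smul_fst, Prod.smul_snd, Prod.fst_add, Prod.snd_add, smul_eq_mul]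
    linear_combination (b.1 * a.2 - a.1 * b.2) * hst
  change 0 ≤ orient a b (s • x + t • y)
  rw [this]
  exact add_nonneg (mul_nonneg hs hx) (mul_nonneg ht hy)

lemma orient_nonneg_of_mem_convexHull {a b z : Pt} {s : Set Pt} (hs : ∀ p ∈ s, 0 ≤ orient a b p)
    (hz : z ∈ convexHull ℝ s) : 0 ≤ orient a b z :=
  convexHull_min hs (convex_setOf_orient_nonneg a b) hz

lemma GenPos.mono {X Y : Set Pt} (h : GenPos X) (hYX : Y ⊆ X) : GenPos Y :=
  fun a ha b hb c hc => h a (hYX ha) b (hYX hb) c (hYX hc)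

section Triangle

variable {a b c z : Pt}

lemma barycentric_orient (h : orient a b c ≠ 0) :
    (orient b c z / orient a b c) • a + (orient c a z / orient a b c) • b +
      (orient a b z / orient a b c) • c = z := by
  rw [div_eq_inv_mul, div_eq_inv_mul, div_eq_inv_mul, mul_smul, mul_smul, mul_smul,
    ← smul_add, ← smul_add, ← orient_smul_eq, smul_smul, inv_mul_cancel₀ h, one_smul]

lemma mem_convexHull_triple_iff (h : 0 < orient a b c) :
    z ∈ convexHull ℝ {a, b, c} ↔ 0 ≤ orient a b z ∧ 0 ≤ orient b c z ∧ 0 ≤ orient c a z := by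
  constructor
  · intro hz
    refine ⟨orient_nonneg_of_mem_convexHull ?_ hz, orient_nonneg_of_mem_convexHull ?_ hz,
      orient_nonneg_of_mem_convexHull ?_ hz⟩ <;>
    · simp only [mem_insert_iff, mem_singleton_iff, forall_eq_or_imp, forall_eq]
      unfold orient at h ⊢
      refine ⟨?_, ?_, ?_⟩ <;> linarith
  · rintro ⟨h₁, h₂, h₃⟩
    have hsum := (convex_convexHull ℝ ({a, b, c} : Set Pt)).sum_mem (t := Finset.univ)
      (w := ![orient b c z / orient a b c, orient c a z / orient a b c,
        orient a b z / orient a b c]) (z := ![a, b, c])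
      (fun i _ => by fin_cases i <;> simp <;> positivity)
      (by simp [Fin.sum_univ_three]; field_simp; linarith [orient_add_orient_add_orient a b c z])
      (fun i _ => subset_convexHull ℝ _ (by fin_cases i <;> simp))
    rw [← barycentric_orient h.ne' (z := z)]
    simpa [Fin.sum_univ_three, add_assoc] using hsum

lemma mem_segment_of_orient_eq_zero (h : 0 < orient a b c) (hz : orient b c z = 0)
    (hab : 0 ≤ orient a b z) (hca : 0 ≤ orient c a z) : z ∈ segment ℝ b c := by
  have hcomb := barycentric_orient h.ne' (z := z)
  rw [hz, zero_div, zero_smul, zero_add] at hcomb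
  refine ⟨_, _, by positivity, by positivity, ?_, hcomb⟩
  rw [← add_div, div_eq_one_iff_eq h.ne', ← orient_add_orient_add_orient a b c z, hz, zero_add]

lemma mem_interior_convexHull_triple (h : 0 < orient a b c) (hab : 0 < orient a b z)
    (hbc : 0 < orient b c z) (hca : 0 < orient c a z) :
    z ∈ interior (convexHull ℝ {a, b, c}) := by
  have hopen : IsOpen {p : Pt | 0 < orient a b p ∧ 0 < orient b c p ∧ 0 < orient c a p} :=
    (isOpen_lt continuous_const (continuous_orient a b)).inter
      ((isOpen_lt continuous_const (continuous_orient b c)).inter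
        (isOpen_lt continuous_const (continuous_orient c a)))
  refine interior_maximal (fun p hp => ?_) hopen ⟨hab, hbc, hca⟩
  exact (mem_convexHull_triple_iff h).2 ⟨hp.1.le, hp.2.1.le, hp.2.2.le⟩

lemma mem_interior_convexHull_triple_of_genPos (hgp : GenPos {a, b, c, z}) (hab : a ≠ b)
    (hac : a ≠ c) (hbc : b ≠ c) (hz : z ∉ ({a, b, c} : Set Pt))
    (hzabc : z ∈ convexHull ℝ {a, b, c}) : z ∈ interior (convexHull ℝ {a, b, c}) := by
  wlog h : 0 < orient a b c generalizing b c
  · have hD : orient a b c ≠ 0 := hgp a (by simp) b (by simp) c (by simp) hab hac hbc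
    have hcb : ({c, b} : Set Pt) = {b, c} := pair_comm c b
    have := this (b := c) (c := b) (by rwa [insert_comm c b]) hac hab hbc.symm (by rwa [hcb])
      (by rwa [hcb]) (by rw [orient_swap_right]; exact neg_pos.2 (lt_of_le_of_ne (not_lt.1 h) hD))
    rwa [hcb] at this
  simp only [mem_insert_iff, mem_singleton_iff, not_or] at hz
  obtain ⟨hza, hzb, hzc⟩ := hz
  obtain ⟨h₁, h₂, h₃⟩ := (mem_convexHull_triple_iff h).1 hzabc
  refine mem_interior_convexHull_triple h (h₁.lt_of_ne' ?_) (h₂.lt_of_ne' ?_) (h₃.lt_of_ne' ?_)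
  · exact hgp a (by simp) b (by simp) z (by simp) hab (Ne.symm hza) (Ne.symm hzb)
  · exact hgp b (by simp) c (by simp) z (by simp) hbc (Ne.symm hzb) (Ne.symm hzc)
  · exact hgp c (by simp) a (by simp) z (by simp) (Ne.symm hac) (Ne.symm hzc) (Ne.symm hza)

end Triangle

lemma orient_eq_zero_of_mem_segment {a b z : Pt} (hz : z ∈ segment ℝ a b) : orient a b z = 0 := by
  obtain ⟨s, t, -, -, hst, rfl⟩ := hz
  simp only [orient, Prod.smul_fst, Prod.smul_snd, Prod.fst_add, Prod.snd_add, smul_eq_mul]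
  linear_combination ((b.1 - a.1) * a.2 - (b.2 - a.2) * a.1) * hst

lemma Set.Finite.convexHull_extremePoints_convexHull {E : Type*} [NormedAddCommGroup E]
    [NormedSpace ℝ E] {F : Set E} (hF : F.Finite) :
    convexHull ℝ ((convexHull ℝ F).extremePoints ℝ) = convexHull ℝ F := by
  have hext : ((convexHull ℝ F).extremePoints ℝ).Finite := hF.subset extremePoints_convexHull_subset
  calc convexHull ℝ ((convexHull ℝ F).extremePoints ℝ)
      = closure (convexHull ℝ ((convexHull ℝ F).extremePoints ℝ)) :=
        (hext.isClosed_convexHull ℝ).closure_eq.symm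
    _ = convexHull ℝ F :=
        closure_convexHull_extremePoints (hF.isCompact_convexHull ℝ) (convex_convexHull ℝ F)

lemma Set.Finite.mem_convexHull_sdiff_of_notMem_extremePoints {E : Type*} [NormedAddCommGroup E]
    [NormedSpace ℝ E] {F : Set E} {x : E} (hF : F.Finite) (hx : x ∈ F)
    (hxe : x ∉ (convexHull ℝ F).extremePoints ℝ) : x ∈ convexHull ℝ (F \ {x}) := by
  have := subset_convexHull ℝ F hx
  rw [← hF.convexHull_extremePoints_convexHull] at this
  exact convexHull_mono (fun p hp => show p ∈ F \ {x} from ⟨extremePoints_convexHull_subset hp,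
    fun hpx => hxe ((mem_singleton_iff.1 hpx) ▸ hp)⟩) this

lemma mem_interior_convexHull_of_genPos {G : Set Pt} {y : Pt} (hgp : GenPos (insert y G))
    (hy : y ∉ G) (hyG : y ∈ convexHull ℝ G) : y ∈ interior (convexHull ℝ G) := by
  rw [convexHull_eq_union] at hyG
  simp only [mem_iUnion] at hyG
  obtain ⟨t, htG, hind, hyt⟩ := hyG
  have hcard : t.card ≤ 3 := calc
    t.card = Fintype.card t := (Fintype.card_coe t).symm
    _ ≤ _ := hind.card_le_finrank_succ
    _ ≤ Module.finrank ℝ Pt + 1 := by gcongr; exact Submodule.finrank_le _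
    _ = 3 := by simp
  have hmem : ∀ p ∈ t, p ∈ G ∧ p ≠ y := fun p hp => ⟨htG hp, fun h => hy (h ▸ htG hp)⟩
  interval_cases h : t.card
  · simp_all
  · obtain ⟨a, rfl⟩ := Finset.card_eq_one.1 h
    simp_all
  · obtain ⟨a, b, hab, rfl⟩ := Finset.card_eq_two.1 h
    simp only [Finset.coe_insert, Finset.coe_singleton, convexHull_pair] at hyt
    simp only [Finset.mem_insert, Finset.mem_singleton, forall_eq_or_imp, forall_eq] at hmem
    exact absurd (orient_eq_zero_of_mem_segment hyt)
      (hgp a (by simp [hmem.1.1]) b (by simp [hmem.2.1]) y (by simp) hab hmem.1.2 hmem.2.2)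
  · obtain ⟨a, b, c, hab, hac, hbc, rfl⟩ := Finset.card_eq_three.1 h
    simp only [Finset.coe_insert, Finset.coe_singleton] at hyt htG
    simp only [Finset.mem_insert, Finset.mem_singleton, forall_eq_or_imp, forall_eq] at hmem
    refine interior_mono (convexHull_mono htG) (mem_interior_convexHull_triple_of_genPos
      (hgp.mono ?_) hab hac hbc ?_ hyt)
    · simp only [insert_subset_iff, singleton_subset_iff, mem_insert_iff, true_or, or_true,
        hmem.1.1, hmem.2.1.1, hmem.2.2.1, and_true]
    · simp only [mem_insert_iff, mem_singleton_iff, not_or]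
      exact ⟨hmem.1.2.symm, hmem.2.1.2.symm, hmem.2.2.2.symm⟩

lemma mem_interior_convexHull_of_notMem_extremePts {F : Set Pt} {y : Pt} (hF : F.Finite)
    (hgp : GenPos F) (hy : y ∈ F) (hye : y ∉ extremePts F) :
    y ∈ interior (convexHull ℝ F) :=
  interior_mono (convexHull_mono sdiff_subset) <| mem_interior_convexHull_of_genPos (G := F \ {y})
    (by rwa [insert_sdiff_singleton, insert_eq_of_mem hy]) (fun h => h.2 rfl)
    (hF.mem_convexHull_sdiff_of_notMem_extremePoints hy hye)

lemma three_le_ncard_of_nonempty_interior {R : Set Pt} (hR : R.Finite)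
    (h : (interior (convexHull ℝ R)).Nonempty) : 3 ≤ R.ncard := by
  classical
  have htop := AffineSubspace.vectorSpan_eq_top_of_affineSpan_eq_top ℝ Pt Pt
    (interior_convexHull_nonempty_iff_affineSpan_eq_top.1 h)
  have hcard : hR.toFinset.card = (R.ncard - 1) + 1 := by
    have : R.Nonempty := (convexHull_nonempty_iff.1 ⟨_, interior_subset h.some_mem⟩)
    rw [← ncard_eq_toFinset_card R hR]
    have := (ncard_pos hR).2 this
    omega
  have := finrank_vectorSpan_image_finset_le ℝ id hR.toFinset hcard
  rw [Finset.image_id, Finite.coe_toFinset, htop, finrank_top, Module.finrank_prod,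
    Module.finrank_self] at this
  omega

lemma exists_injOn_fst_add_mul_snd {R : Set Pt} (hR : R.Finite) :
    ∃ c : ℝ, InjOn (fun p : Pt => p.1 + c * p.2) R := by
  have hbad : {c : ℝ | ∃ p ∈ R, ∃ q ∈ R, p ≠ q ∧ p.1 + c * p.2 = q.1 + c * q.2}.Finite := by
    refine ((hR.prod hR).image fun pq : Pt × Pt => (pq.2.1 - pq.1.1) / (pq.1.2 - pq.2.2)).subset ?_
    rintro c ⟨p, hp, q, hq, hpq, h⟩
    have h₂ : p.2 - q.2 ≠ 0 := fun h₂ =>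
      hpq (Prod.ext (by linear_combination h - c * h₂) (sub_eq_zero.1 h₂))
    exact ⟨(p, q), ⟨hp, hq⟩, by field_simp; linear_combination -h⟩
  obtain ⟨c, hc⟩ := hbad.infinite_compl.nonempty
  exact ⟨c, fun p hp q hq h => by_contra fun hpq => hc ⟨p, hp, q, hq, hpq, h⟩⟩

lemma GenPos.exists_ear {R : Set Pt} (hgp : GenPos R) (hR : R.Finite) (h3 : 3 ≤ R.ncard) :
    ∃ v ∈ R, ∃ u ∈ R, ∃ w ∈ R, u ≠ v ∧ w ≠ v ∧ 0 < orient v u w ∧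
      ∀ p ∈ R, 0 ≤ orient v u p ∧ 0 ≤ orient w v p := by
  obtain ⟨c, hc⟩ := exists_injOn_fst_add_mul_snd hR
  set ℓ : Pt → ℝ := fun p => p.1 + c * p.2
  obtain ⟨v, hv, hvmax⟩ := Set.exists_max_image R ℓ hR (nonempty_of_ncard_ne_zero (by omega))
  have hR' : 1 < (R \ {v}).ncard := by
    have := ncard_sdiff_singleton_add_one hv hR; omega
  have hlt : ∀ p ∈ R \ {v}, 0 < ℓ v - ℓ p := fun p hp =>
    sub_pos.2 ((hvmax p hp.1).lt_of_ne fun h => hp.2 (hc hp.1 hv h))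
  -- `R \ {v}` lies in the open half-plane `ℓ < ℓ v`, where `g` measures the angle around `v`
  set g : Pt → ℝ := fun p => (p.2 - v.2) / (ℓ v - ℓ p)
  have key : ∀ p ∈ R \ {v}, ∀ q ∈ R \ {v},
      orient v p q = (ℓ v - ℓ p) * (ℓ v - ℓ q) * (g p - g q) := by
    intro p hp q hq
    have := (hlt p hp).ne'
    have := (hlt q hq).ne'
    simp only [g]
    field_simp
    simp only [ℓ, orient]
    ring
  have hne : (R \ {v}).Nonempty := nonempty_of_ncard_ne_zero (by omega)
  obtain ⟨u, hu, humax⟩ := Set.exists_max_image _ g (hR.subset sdiff_subset) hne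
  obtain ⟨w, hw, hwmin⟩ := Set.exists_min_image _ g (hR.subset sdiff_subset) hne
  have hwedge : ∀ p ∈ R, 0 ≤ orient v u p ∧ 0 ≤ orient w v p := by
    intro p hp
    by_cases hpv : p = v
    · subst hpv; exact ⟨(orient_self_left p u).ge, (orient_self_right w p).ge⟩
    have hp' : p ∈ R \ {v} := ⟨hp, hpv⟩
    rw [show orient w v p = orient v p w by unfold orient; ring, key u hu p hp', key p hp' w hw]
    exact ⟨mul_nonneg (mul_pos (hlt u hu) (hlt p hp')).le (sub_nonneg.2 (humax p hp')),
      mul_nonneg (mul_pos (hlt p hp') (hlt w hw)).le (sub_nonneg.2 (hwmin p hp'))⟩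
  have huw : u ≠ w := by
    rintro rfl
    obtain ⟨p, q, hp, hq, hpq⟩ := (one_lt_ncard_iff (hR.subset sdiff_subset)).1 hR'
    refine hgp v hv p hp.1 q hq.1 (Ne.symm hp.2) (Ne.symm hq.2) hpq ?_
    rw [key p hp q hq, le_antisymm (humax p hp) (hwmin p hp),
      le_antisymm (humax q hq) (hwmin q hq), sub_self, mul_zero]
  refine ⟨v, hv, u, hu.1, w, hw.1, hu.2, hw.2, ?_, hwedge⟩
  exact (hwedge w hw.1).1.lt_of_ne' (hgp v hv u hu.1 w hw.1 (Ne.symm hu.2) (Ne.symm hw.2) huw)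

lemma orient_nonneg_of_ear {R : Set Pt} {v u w : Pt} (hconv : R ⊆ extremePts R) (hv : v ∈ R)
    (hu : u ∈ R) (hw : w ∈ R) (hd : 0 < orient v u w)
    (hwedge : ∀ p ∈ R, 0 ≤ orient v u p ∧ 0 ≤ orient w v p) :
    ∀ p ∈ R \ {v}, 0 ≤ orient w u p := by
  rintro p ⟨hp, hpv⟩
  by_contra! hneg
  have hmem : p ∈ convexHull ℝ {v, u, w} := by
    refine (mem_convexHull_triple_iff hd).2 ⟨(hwedge p hp).1, ?_, (hwedge p hp).2⟩
    linarith [orient_swap_left u w p]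
  have hsub : convexHull ℝ {v, u, w} ⊆ convexHull ℝ R :=
    convexHull_mono (by simp [insert_subset_iff, hv, hu, hw])
  have := extremePoints_convexHull_subset
    (inter_extremePoints_subset_extremePoints_of_subset hsub ⟨hmem, hconv hp⟩)
  rcases this with rfl | rfl | rfl
  · exact hpv rfl
  · rw [orient_self_right] at hneg; exact hneg.false
  · rw [orient_self_left] at hneg; exact hneg.false

lemma exists_mem_segment_orient_eq_zero {u w x y : Pt} (hx : 0 ≤ orient u w x)
    (hy : orient u w y ≤ 0) : ∃ z ∈ segment ℝ x y, orient u w z = 0 :=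
  (convex_segment x y).isPreconnected.intermediate_value (right_mem_segment ℝ x y)
    (left_mem_segment ℝ x y) (continuous_orient u w).continuousOn ⟨hy, hx⟩

lemma convexHull_insert_subset_union {v u w : Pt} {R : Set Pt} (hd : 0 < orient v u w)
    (hu : u ∈ R) (hw : w ∈ R)
    (hR : ∀ p ∈ R, 0 ≤ orient v u p ∧ 0 ≤ orient w v p ∧ 0 ≤ orient w u p) :
    convexHull ℝ (insert v R) ⊆ convexHull ℝ {v, u, w} ∪ convexHull ℝ R := by
  -- `x` lies on a segment `[v, y]` with `y ∈ convexHull ℝ R`; split it where it crosses the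
  -- line `uw`, which happens inside the segment `[u, w]`.
  intro x hx
  rw [convexHull_insert ⟨u, hu⟩, mem_convexJoin] at hx
  obtain ⟨v', hv', y, hy, hvxy⟩ := hx
  rw [mem_singleton_iff.1 hv'] at hvxy
  have hvu : segment ℝ v y ⊆ {z | 0 ≤ orient v u z} :=
    (convex_setOf_orient_nonneg v u).segment_subset (orient_self_left v u).ge
      (orient_nonneg_of_mem_convexHull (fun p hp => (hR p hp).1) hy)
  have hwv : segment ℝ v y ⊆ {z | 0 ≤ orient w v z} :=
    (convex_setOf_orient_nonneg w v).segment_subset (orient_self_right w v).ge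
      (orient_nonneg_of_mem_convexHull (fun p hp => (hR p hp).2.1) hy)
  have huw : ∀ z ∈ segment ℝ v y, orient u w z = 0 → z ∈ segment ℝ u w := fun z hz hz0 =>
    mem_segment_of_orient_eq_zero hd hz0 (hvu hz) (hwv hz)
  have hv0 : 0 ≤ orient u w v := (orient_rotate v u w ▸ hd).le
  have hy0 : orient u w y ≤ 0 := by
    linarith [orient_swap_left u w y,
      orient_nonneg_of_mem_convexHull (fun p hp => (hR p hp).2.2) hy]
  have hvxy := mem_segment_iff_wbtw.1 hvxy
  rcases le_total 0 (orient u w x) with hx0 | hx0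
  · obtain ⟨z, hxzy, hz0⟩ := exists_mem_segment_orient_eq_zero hx0 hy0
    have hxzy := mem_segment_iff_wbtw.1 hxzy
    have hz := huw z (mem_segment_iff_wbtw.2 (hvxy.trans_right hxzy)) hz0
    exact Or.inl <| (convex_convexHull ℝ _).segment_subset (subset_convexHull ℝ _ (by simp))
      (segment_subset_convexHull (by simp) (by simp) hz)
      (mem_segment_iff_wbtw.2 (hvxy.trans_right_left hxzy))
  · obtain ⟨z, hvzx, hz0⟩ := exists_mem_segment_orient_eq_zero hv0 hx0
    have hvzx := mem_segment_iff_wbtw.1 hvzx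
    have hz := huw z (mem_segment_iff_wbtw.2 (hvxy.trans_left hvzx)) hz0
    exact Or.inr <| (convex_convexHull ℝ R).segment_subset (segment_subset_convexHull hu hw hz) hy
      (mem_segment_iff_wbtw.2 (hvxy.trans_left_right hvzx))

/-- The relation between the layer `R_{j+1}` and the set `X_j` inside it. -/
structure IsTriangleFilling (R S : Set Pt) : Prop where
  finite_left : R.Finite
  finite_right : S.Finite
  genPos : GenPos (R ∪ S)
  disjoint : Disjoint R S
  subset_extremePts : R ⊆ extremePts R
  subset_interior : S ⊆ interior (convexHull ℝ R)
  existsUnique : ∀ a ∈ R, ∀ b ∈ R, ∀ c ∈ R, a ≠ b → a ≠ c → b ≠ c →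
    ∃! p, p ∈ S ∩ interior (convexHull ℝ {a, b, c})

namespace IsTriangleFilling

variable {R S : Set Pt} {v u w q : Pt}

lemma subset_interior_sdiff_ear (h : IsTriangleFilling R S) (hv : v ∈ R) (hu : u ∈ R)
    (hw : w ∈ R) (hd : 0 < orient v u w)
    (hcover : convexHull ℝ R ⊆ convexHull ℝ {v, u, w} ∪ convexHull ℝ (R \ {v}))
    (hfar : ∀ z ∈ convexHull ℝ (R \ {v}), orient u w z ≤ 0)
    (hq : ∀ p ∈ S, p ∈ interior (convexHull ℝ {v, u, w}) → p = q) :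
    S \ {q} ⊆ interior (convexHull ℝ (R \ {v})) := by
  rintro p ⟨hpS, hpq⟩
  have hpR : p ∉ R := fun hpR => h.disjoint.notMem_of_mem_left hpR hpS
  have hgp : GenPos {v, u, w, p} := h.genPos.mono (by
    simp [insert_subset_iff, hv, hu, hw, hpS])
  have huw : u ≠ w := by rintro rfl; simp [orient_self_right] at hd
  have hvu : v ≠ u := by rintro rfl; simp [orient] at hd
  have hvw : v ≠ w := by rintro rfl; simp [orient] at hd
  have hpvuw : p ∉ ({v, u, w} : Set Pt) := by
    rintro (rfl | rfl | rfl) <;> contradiction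
  -- beyond `uw`, a neighbourhood of `p` in the big polygon lies in the small one;
  -- on `v`'s side, `p` would be a second point of `S` inside the triangle `vuw`.
  rcases (hgp u (by simp) w (by simp) p (by simp) huw (by grind) (by grind)).lt_or_gt
    with hneg | hpos
  · have hopen : IsOpen (interior (convexHull ℝ R) ∩ {z | orient u w z < 0}) :=
      isOpen_interior.inter (isOpen_lt (continuous_orient u w) continuous_const)
    refine interior_maximal (fun z hz => ?_) hopen ⟨h.subset_interior hpS, hneg⟩
    refine (hcover (interior_subset hz.1)).resolve_left fun hz' => ?_
    exact hz.2.not_ge ((mem_convexHull_triple_iff hd).1 hz').2.1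
  · have hmem : p ∈ convexHull ℝ {v, u, w} :=
      (hcover (interior_subset (h.subset_interior hpS))).resolve_right
        fun hp' => (hfar p hp').not_gt hpos
    exact absurd (hq p hpS (mem_interior_convexHull_triple_of_genPos hgp hvu hvw huw hpvuw hmem))
      hpq

lemma exists_sdiff (h : IsTriangleFilling R S) (h4 : 4 ≤ R.ncard) :
    ∃ v ∈ R, ∃ q ∈ S, IsTriangleFilling (R \ {v}) (S \ {q}) := by
  obtain ⟨v, hv, u, hu, w, hw, huv, hwv, hd, hwedge⟩ :=
    (h.genPos.mono subset_union_left).exists_ear h.finite_left (by omega)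
  have hfar := orient_nonneg_of_ear h.subset_extremePts hv hu hw hd hwedge
  have hcover := convexHull_insert_subset_union hd (R := R \ {v}) ⟨hu, huv⟩ ⟨hw, hwv⟩
    fun p hp => ⟨(hwedge p hp.1).1, (hwedge p hp.1).2, hfar p hp⟩
  rw [insert_sdiff_singleton, insert_eq_of_mem hv] at hcover
  have hfar' : ∀ z ∈ convexHull ℝ (R \ {v}), orient u w z ≤ 0 := fun z hz => by
    linarith [orient_swap_left u w z, orient_nonneg_of_mem_convexHull hfar hz]
  have huw : u ≠ w := by rintro rfl; simp [orient_self_right] at hd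
  obtain ⟨q, ⟨hqS, hq⟩, hquniq⟩ := h.existsUnique v hv u hu w hw huv.symm hwv.symm huw
  have hqR : q ∉ R := fun hqR => h.disjoint.notMem_of_mem_left hqR hqS
  have hq0 : 0 < orient u w q :=
    ((mem_convexHull_triple_iff hd).1 (interior_subset hq)).2.1.lt_of_ne'
      (h.genPos u (.inl hu) w (.inl hw) q (.inr hqS) huw (by grind) (by grind))
  refine ⟨v, hv, q, hqS, h.finite_left.sdiff, h.finite_right.sdiff,
    h.genPos.mono (union_subset_union sdiff_subset sdiff_subset),
    h.disjoint.mono sdiff_subset sdiff_subset, fun p hp => ?_,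
    h.subset_interior_sdiff_ear hv hu hw hd hcover hfar' fun p hp hpi => hquniq p ⟨hp, hpi⟩, ?_⟩
  · exact inter_extremePoints_subset_extremePoints_of_subset (convexHull_mono sdiff_subset)
      ⟨subset_convexHull ℝ _ hp, h.subset_extremePts hp.1⟩
  intro a ha b hb c hc hab hac hbc
  obtain ⟨p, hp, hpuniq⟩ := h.existsUnique a ha.1 b hb.1 c hc.1 hab hac hbc
  refine ⟨p, ⟨⟨hp.1, fun hpq => ?_⟩, hp.2⟩, fun p' hp' => hpuniq p' ⟨hp'.1.1, hp'.2⟩⟩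
  rw [mem_singleton_iff.1 hpq] at hp
  have habc : ({a, b, c} : Set Pt) ⊆ R \ {v} := by simp [insert_subset_iff, ha, hb, hc]
  exact (hfar' q (convexHull_mono habc (interior_subset hp.2))).not_gt hq0

theorem ncard_add_two (h : IsTriangleFilling R S) (h3 : 3 ≤ R.ncard) :
    S.ncard + 2 = R.ncard := by
  obtain ⟨n, hn⟩ : ∃ n, R.ncard = n + 3 := ⟨R.ncard - 3, by omega⟩
  induction n generalizing R S with
  | zero =>
    obtain ⟨a, b, c, hab, hac, hbc, rfl⟩ := ncard_eq_three.1 hn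
    obtain ⟨q, hq, hquniq⟩ := h.existsUnique a (by simp) b (by simp) c (by simp) hab hac hbc
    have hS : S = {q} := eq_singleton_iff_unique_mem.2
      ⟨hq.1, fun p hp => hquniq p ⟨hp, h.subset_interior hp⟩⟩
    rw [hS, ncard_singleton, hn]
  | succ n ih =>
    obtain ⟨v, hv, q, hq, h'⟩ := h.exists_sdiff (by omega)
    have hR := ncard_sdiff_singleton_add_one hv h.finite_left
    have hS := ncard_sdiff_singleton_add_one hq h.finite_right
    have := ih h' (by omega) (by omega)
    omega

end IsTriangleFilling

section Layers

variable {X : Set Pt} {k j : ℕ}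

lemma iterate_peel_subset (m : ℕ) (S : Set Pt) : peel^[m] S ⊆ S := by
  induction m with
  | zero => exact subset_rfl
  | succ m ih => rw [Function.iterate_succ_apply']; exact sdiff_subset.trans ih

lemma layerSub_subset : layerSub X k j ⊆ X := iterate_peel_subset _ _

lemma layer_subset_layerSub : layer X k j ⊆ layerSub X k j := extremePoints_convexHull_subset

lemma layerSub_eq_sdiff (hjk : j < k) :
    layerSub X k j = layerSub X k (j + 1) \ layer X k (j + 1) := by
  rw [layerSub, show k - j = k - (j + 1) + 1 by omega, Function.iterate_succ_apply']
  rfl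

lemma ncard_layerSub_succ (hX : X.Finite) (hjk : j < k) :
    (layerSub X k (j + 1)).ncard = (layerSub X k j).ncard + (layer X k (j + 1)).ncard := by
  rw [layerSub_eq_sdiff hjk,
    ncard_sdiff_add_ncard_of_subset layer_subset_layerSub (hX.subset layerSub_subset)]

lemma HasLayers.layerSub_zero (hk : HasLayers X k) : layerSub X k 0 = ∅ := hk.1

lemma HasLayers.layerSub_nonempty (hk : HasLayers X k) (hj : 1 ≤ j) (hjk : j ≤ k) :
    (layerSub X k j).Nonempty :=
  nonempty_iff_ne_empty.2 (hk.2 _ (by omega))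

lemma HasLayers.pos (hk : HasLayers X k) (hX : X.Nonempty) : 0 < k :=
  Nat.pos_of_ne_zero fun h => hX.ne_empty (by subst h; exact hk.1)

lemma HasLayers.layer_one (hk : HasLayers X k) (hk0 : 0 < k) : layer X k 1 = layerSub X k 1 :=
  layer_subset_layerSub.antisymm <| sdiff_eq_empty.1 <|
    (layerSub_eq_sdiff hk0).symm.trans hk.layerSub_zero

end Layers

namespace IsNACS

variable {X : Set Pt} {k j : ℕ}

lemma isTriangleFilling (hX : IsNACS X) (hk : HasLayers X k) (hj : 1 ≤ j) (hjk : j < k) :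
    IsTriangleFilling (layer X k (j + 1)) (layerSub X k j) := by
  obtain ⟨hXf, -, hgp, hnacs⟩ := hX
  have hT : (layerSub X k (j + 1)).Finite := hXf.subset layerSub_subset
  have hconv : convexHull ℝ (layer X k (j + 1)) = convexHull ℝ (layerSub X k (j + 1)) :=
    hT.convexHull_extremePoints_convexHull
  have hS := layerSub_eq_sdiff (X := X) hjk
  refine ⟨hT.subset layer_subset_layerSub, hXf.subset layerSub_subset,
    hgp.mono (union_subset (layer_subset_layerSub.trans layerSub_subset) layerSub_subset),
    hS ▸ disjoint_sdiff_right, fun p hp => ?_, ?_, fun a ha b hb c hc hab hac hbc => ?_⟩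
  · rwa [extremePts, hconv]
  · rw [hconv, hS]
    exact fun p hp => mem_interior_convexHull_of_notMem_extremePts hT (hgp.mono layerSub_subset)
      hp.1 hp.2
  · simpa using hnacs k hk (j + 1) (by omega) hjk a ha b hb c hc hab hac hbc

lemma ncard_layer_one (hX : IsNACS X) (hk : HasLayers X k) :
    (layer X k 1).ncard = 1 ∨ (layer X k 1).ncard = 2 := by
  have hk0 := hk.pos hX.2.1
  have hfin : (layer X k 1).Finite := hX.1.subset (layer_subset_layerSub.trans layerSub_subset)
  have hpos : 0 < (layer X k 1).ncard :=
    (ncard_pos hfin).2 (hk.layer_one hk0 ▸ hk.layerSub_nonempty le_rfl hk0)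
  have hle : (layer X k 1).ncard ≤ 2 := by
    by_contra! h
    obtain ⟨a, ha, b, hb, c, hc, hab, hac, hbc⟩ := (two_lt_ncard hfin).1 h
    obtain ⟨p, hp, -⟩ := hX.2.2.2 k hk 1 le_rfl hk0 a ha b hb c hc hab hac hbc
    simpa [hk.layerSub_zero] using hp.1
  omega

lemma ncard_layer_succ (hX : IsNACS X) (hk : HasLayers X k) (hj : 1 ≤ j) (hjk : j < k) :
    (layer X k (j + 1)).ncard = (layerSub X k j).ncard + 2 := by
  have hfill := hX.isTriangleFilling hk hj hjk
  exact (hfill.ncard_add_two (three_le_ncard_of_nonempty_interior hfill.finite_left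
    ((hk.layerSub_nonempty hj hjk.le).mono hfill.subset_interior))).symm

lemma ncard_layerSub_add_two (hX : IsNACS X) (hk : HasLayers X k) (hj : 1 ≤ j) (hjk : j ≤ k) :
    (layerSub X k j).ncard + 2 = ((layer X k 1).ncard + 2) * 2 ^ (j - 1) := by
  induction j with
  | zero => omega
  | succ j ih =>
    rcases Nat.eq_zero_or_pos j with rfl | hj0
    · simp [hk.layer_one (by omega)]
    rw [ncard_layerSub_succ hX.1 (by omega), hX.ncard_layer_succ hk hj0 (by omega),
      show j + 1 - 1 = j - 1 + 1 by omega, pow_succ, ← mul_assoc, ← ih hj0 (by omega)]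
    ring

lemma ncard_layer (hX : IsNACS X) (hk : HasLayers X k) (hj : 2 ≤ j) (hjk : j ≤ k) :
    (layer X k j).ncard = ((layer X k 1).ncard + 2) * 2 ^ (j - 2) := by
  obtain ⟨i, rfl⟩ : ∃ i, j = i + 1 + 1 := ⟨j - 2, by omega⟩
  rw [hX.ncard_layer_succ hk (by omega) (by omega),
    hX.ncard_layerSub_add_two hk (by omega) (by omega)]
  rfl

end IsNACS

/-- The sizes of the convex layers of a nested almost convex set. -/
theorem nacs_layer_sizes (X : Set Pt) (hX : IsNACS X) (k : ℕ) (hk : HasLayers X k) :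
    (∀ j, 1 ≤ j → j ≤ k → (layer X k j).ncard = 2 ^ j) ∨
    ((layer X k 1).ncard = 1 ∧
      ∀ j, 2 ≤ j → j ≤ k → (layer X k j).ncard = 3 * 2 ^ (j - 2)) := by
  rcases hX.ncard_layer_one hk with h1 | h2
  · exact .inr ⟨h1, fun j hj hjk => by rw [hX.ncard_layer hk hj hjk, h1]⟩
  · refine .inl fun j hj hjk => ?_
    rcases hj.eq_or_lt with rfl | hj
    · exact h2
    obtain ⟨i, rfl⟩ : ∃ i, j = i + 2 := ⟨j - 2, by omega⟩
    rw [hX.ncard_layer hk (by omega) hjk, h2, Nat.add_sub_cancel, pow_add]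
    ring
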